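/- Let (P₁,…,P_J) be a multivariate species sampling process with non-atomic base measure P₀ and weight array π, and let X be a sample from (P₁,…,P_J). Then for all j ≠ k in {1,…,J} and every Borel set A with Var[P_j(A)] > 0 and Var[P_k(A)] > 0: (i) Corr[P_j(A), P_k(A)] ≥ 0; (ii) Corr[P_j(A), P_k(A)] = 0 if and only if ℙ(X_{j,1} = X_{k,1}) = 0, if and only if E[π_{j,h} π_{k,h}] = 0 for every h ≥ 1; (iii) if ℙ(X_{j,1} = X_{j,2}) = ℙ(X_{k,1} = X_{k,2}) > 0, then Corr[P_j(A), P_k(A)] = ℙ(X_{j,1} = X_{k,1}) / ℙ(X_{j,1} = X_{j,2}). -/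

import Mathlib

/-!
Write `P j (A) = ∑ₒ wⱼ(o) hₒ` over `o : Option ℕ`, with `wⱼ(some h) = π_{j,h}`,
`wⱼ(none) = 1 - ∑ₕ π_{j,h}`, `h_{some h} = 1_A(θ_h)` and `h_none = P₀(A)`. The weights are
independent of the hits, and hits of distinct components are independent with mean `P₀(A)`, so
`E[P j (A) P k (A)] = P₀(A)² + (P₀(A) - P₀(A)²) ρ_{jk}` with `ρ_{jk} = ∑ₕ E[π_{j,h} π_{k,h}]`.
Hence `Corr[P j (A), P k (A)] = ρ_{jk} / √(ρ_{jj} ρ_{kk})`. On the other hand, `P₀` is diffuse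
and the atoms are a.s. distinct, so two sample values from different positions coincide exactly
when they pick the same atom: `ℙ(X_{j,i} = X_{k,m}) = ρ_{jk}`. All claims follow from these two
formulas.
-/

open MeasureTheory ProbabilityTheory
open scoped ENNReal

namespace MSSP

variable {Ω : Type*} [MeasurableSpace Ω] {𝕏 : Type*} [MeasurableSpace 𝕏]

/-- The species-sampling mixture measure `∑ₕ wₕ δ_{aₕ} + (1 - ∑ₕ wₕ) P₀`. -/
noncomputable def mixM (P₀ : Measure 𝕏) (w : ℕ → ℝ) (a : ℕ → 𝕏) : Measure 𝕏 :=
  Measure.sum (fun h => ENNReal.ofReal (w h) • Measure.dirac (a h)) +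
    ENNReal.ofReal (1 - ∑' h, w h) • P₀

/-- `(P j)_{j}` is a multivariate species sampling process with base measure `P₀`,
weight array `π` and atoms `θ`. -/
structure IsMSSPwith {ι : Type*} (Pr : Measure Ω) (P₀ : Measure 𝕏)
    (P : ι → Ω → Measure 𝕏) (π : ι → ℕ → Ω → ℝ) (θ : ℕ → Ω → 𝕏) : Prop where
  measP : ∀ j (A : Set 𝕏), MeasurableSet A → Measurable fun ω => P j ω A
  probP : ∀ j ω, IsProbabilityMeasure (P j ω)
  measπ : ∀ j h, Measurable (π j h)
  subprob : ∀ j, ∀ᵐ ω ∂Pr, (∀ h, 0 ≤ π j h ω ∧ π j h ω ≤ 1) ∧ ∑' h, π j h ω ≤ 1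
  measθ : ∀ h, Measurable (θ h)
  lawθ : ∀ h, Measure.map (θ h) Pr = P₀
  iidθ : iIndepFun θ Pr
  indepθπ : IndepFun (fun ω (h : ℕ) => θ h ω) (fun ω (j : ι) (h : ℕ) => π j h ω) Pr
  repr : ∀ j, ∀ᵐ ω ∂Pr, P j ω = mixM P₀ (fun h => π j h ω) (fun h => θ h ω)

/-- `(P j)_j` is a multivariate species sampling process with base measure `P₀`. -/
def IsMSSP {ι : Type*} (Pr : Measure Ω) (P₀ : Measure 𝕏)
    (P : ι → Ω → Measure 𝕏) : Prop :=
  ∃ π θ, IsMSSPwith Pr P₀ P π θ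

/-- `X` is a sample from the vector of random probability measures `P`:
conditionally on `P` the entries are independent, with `X j i` distributed as `P j`. -/
def IsSample {ι : Type*} (Pr : Measure Ω) (P : ι → Ω → Measure 𝕏)
    (X : ι → ℕ → Ω → 𝕏) : Prop :=
  (∀ j i, Measurable (X j i)) ∧
  ∀ (s : Finset (ι × ℕ)) (A : ι × ℕ → Set 𝕏), (∀ p ∈ s, MeasurableSet (A p)) →
    Pr {ω | ∀ p ∈ s, X p.1 p.2 ω ∈ A p} = ∫⁻ ω, ∏ p ∈ s, P p.1 ω (A p) ∂Pr

/-- Covariance of two real random variables. -/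
noncomputable def covR (Pr : Measure Ω) (f g : Ω → ℝ) : ℝ :=
  ∫ ω, f ω * g ω ∂Pr - (∫ ω, f ω ∂Pr) * (∫ ω, g ω ∂Pr)

/-- Correlation of two real random variables. -/
noncomputable def corrR (Pr : Measure Ω) (f g : Ω → ℝ) : ℝ :=
  covR Pr f g / (Real.sqrt (variance f Pr) * Real.sqrt (variance g Pr))

theorem _root_.ENNReal.tsum_option {α : Type*} (f : Option α → ℝ≥0∞) :
    ∑' o, f o = f none + ∑' a, f (some a) := by
  rw [ENNReal.tsum_eq_add_tsum_ite none]
  congr 1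
  rw [← (Option.some_injective α).tsum_eq]
  · simp
  · intro o ho
    cases o with
    | none => simp at ho
    | some a => exact ⟨a, rfl⟩

theorem _root_.ENNReal.tsum_prod_mul_ite_eq {α : Type*} [DecidableEq α] (F : α → α → ℝ≥0∞)
    (e : α → ℝ≥0∞) :
    ∑' p : α × α, F p.1 p.2 * (if p.2 = p.1 then e p.1 else 0) = ∑' a, F a a * e a := by
  rw [ENNReal.tsum_prod (f := fun a b => F a b * if b = a then e a else 0)]
  congr with a
  rw [tsum_eq_single a fun b hb => by simp [hb]]
  simp

theorem _root_.ENNReal.tsum_mul_tsum {α β : Type*} (f : α → ℝ≥0∞) (g : β → ℝ≥0∞) :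
    (∑' a, f a) * ∑' b, g b = ∑' p : α × β, f p.1 * g p.2 := by
  rw [ENNReal.tsum_prod (f := fun a b => f a * g b), ← ENNReal.tsum_mul_right]
  exact tsum_congr fun a => ENNReal.tsum_mul_left.symm

theorem _root_.MeasureTheory.Measure.prod_diagonal {α : Type*} [MeasurableSpace α]
    [MeasurableEq α] (μ ν : Measure α) [SFinite ν] :
    μ.prod ν (Set.diagonal α) = ∫⁻ x, ν {x} ∂μ := by
  rw [Measure.prod_apply measurableSet_diagonal]
  congr 1
  funext x
  congr 1
  ext y
  simp [eq_comm]

theorem _root_.ProbabilityTheory.IndepFun.lintegral_tsum_mul {κ α β : Type*} [Countable κ]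
    [MeasurableSpace α] [MeasurableSpace β] {μ : Measure Ω} {U : Ω → α} {V : Ω → β}
    (hU : Measurable U) (hV : Measurable V) (hUV : IndepFun U V μ)
    {f : κ → α → ℝ≥0∞} {g : κ → β → ℝ≥0∞} (hf : ∀ i, Measurable (f i))
    (hg : ∀ i, Measurable (g i)) :
    ∫⁻ ω, ∑' i, f i (U ω) * g i (V ω) ∂μ
      = ∑' i, (∫⁻ ω, f i (U ω) ∂μ) * ∫⁻ ω, g i (V ω) ∂μ := by
  rw [lintegral_tsum fun i =>
    (by fun_prop : Measurable fun ω => f i (U ω) * g i (V ω)).aemeasurable]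
  congr with i
  exact lintegral_mul_eq_lintegral_mul_lintegral_of_indepFun ((hf i).comp hU) ((hg i).comp hV)
    (hUV.comp (hf i) (hg i))

/-- Weights and hits of the components of a species sampling measure, indexed by `Option ℕ`:
`some h` is the atom `h` and `none` the diffuse part `P₀`. -/
noncomputable def atomWeight (w : ℕ → ℝ) : Option ℕ → ℝ≥0∞
  | none => 1 - ∑' h, ENNReal.ofReal (w h)
  | some h => ENNReal.ofReal (w h)

noncomputable def atomHit (P₀ : Measure 𝕏) (A : Set 𝕏) (a : ℕ → 𝕏) : Option ℕ → ℝ≥0∞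
  | none => P₀ A
  | some h => A.indicator 1 (a h)

theorem measurable_atomWeight (o : Option ℕ) : Measurable fun w : ℕ → ℝ => atomWeight w o := by
  cases o with
  | none => exact measurable_const.sub (Measurable.tsum fun h => by fun_prop)
  | some h => exact (measurable_pi_apply h).ennreal_ofReal

theorem measurable_atomWeight_apply {ι : Type*} (j : ι) (o : Option ℕ) :
    Measurable fun a : ι → ℕ → ℝ => atomWeight (a j) o :=
  (measurable_atomWeight o).comp (measurable_pi_apply j)

theorem measurable_atomHit (P₀ : Measure 𝕏) {A : Set 𝕏} (hA : MeasurableSet A) (o : Option ℕ) :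
    Measurable fun a : ℕ → 𝕏 => atomHit P₀ A a o := by
  cases o with
  | none => exact measurable_const
  | some h => exact (measurable_one.indicator hA).comp (measurable_pi_apply h)

section Mixture

variable {P₀ : Measure 𝕏} {w : ℕ → ℝ} {a : ℕ → 𝕏}

theorem mixM_apply {s : Set 𝕏} (hs : MeasurableSet s) :
    mixM P₀ w a s = ∑' h, ENNReal.ofReal (w h) * s.indicator 1 (a h)
      + ENNReal.ofReal (1 - ∑' h, w h) * P₀ s := by
  simp [mixM, Measure.sum_apply _ hs, Measure.dirac_apply' _ hs]

theorem mixM_univ [IsProbabilityMeasure P₀] :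
    mixM P₀ w a Set.univ = ∑' h, ENNReal.ofReal (w h) + ENNReal.ofReal (1 - ∑' h, w h) := by
  simp [mixM_apply MeasurableSet.univ]

theorem ofReal_one_sub_tsum
    (hw : ∑' h, ENNReal.ofReal (w h) + ENNReal.ofReal (1 - ∑' h, w h) = 1) :
    ENNReal.ofReal (1 - ∑' h, w h) = 1 - ∑' h, ENNReal.ofReal (w h) := by
  rw [← hw, ENNReal.add_sub_cancel_left (ne_top_of_le_ne_top ENNReal.one_ne_top
    (le_of_le_of_eq le_self_add hw))]

theorem tsum_atomWeight
    (hw : ∑' h, ENNReal.ofReal (w h) + ENNReal.ofReal (1 - ∑' h, w h) = 1) :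
    ∑' o, atomWeight w o = 1 := by
  rw [ENNReal.tsum_option, atomWeight, ← ofReal_one_sub_tsum hw, add_comm, ← hw]
  rfl

theorem mixM_apply_eq_tsum_atom
    (hw : ∑' h, ENNReal.ofReal (w h) + ENNReal.ofReal (1 - ∑' h, w h) = 1)
    {s : Set 𝕏} (hs : MeasurableSet s) :
    mixM P₀ w a s = ∑' o, atomWeight w o * atomHit P₀ s a o := by
  rw [mixM_apply hs, ofReal_one_sub_tsum hw, ENNReal.tsum_option, add_comm]
  rfl

end Mixture

theorem lintegral_mixM_singleton [MeasurableSingletonClass 𝕏] {P₀ : Measure 𝕏}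
    [NullSingletonClass P₀] (w v : ℕ → ℝ) {a : ℕ → 𝕏} (ha : Function.Injective a) :
    ∫⁻ x, mixM P₀ v a {x} ∂(mixM P₀ w a)
      = ∑' h, ENNReal.ofReal (w h) * ENNReal.ofReal (v h) := by
  have hsing : ∀ x, mixM P₀ v a {x}
      = ∑' l, ENNReal.ofReal (v l) * ({a l} : Set 𝕏).indicator 1 x := by
    intro x
    rw [mixM_apply (measurableSet_singleton x), measure_singleton, mul_zero, add_zero]
    congr with l
    by_cases hx : a l = x <;> simp [hx, Ne.symm]
  have hmeas : Measurable fun x => ∑' l, ENNReal.ofReal (v l) * ({a l} : Set 𝕏).indicator 1 x :=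
    Measurable.tsum fun l => (measurable_one.indicator (measurableSet_singleton _)).const_mul _
  have hdiffuse : ∫⁻ x, ∑' l, ENNReal.ofReal (v l) * ({a l} : Set 𝕏).indicator 1 x ∂P₀ = 0 := by
    rw [lintegral_tsum fun l => ((measurable_one.indicator
      (measurableSet_singleton _)).const_mul _).aemeasurable]
    simp [lintegral_const_mul _ (measurable_one.indicator (measurableSet_singleton _)),
      lintegral_indicator_one (measurableSet_singleton _)]
  simp_rw [hsing]
  rw [mixM, lintegral_add_measure, lintegral_sum_measure, lintegral_smul_measure, hdiffuse,
    smul_zero, add_zero]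
  congr with h
  rw [lintegral_smul_measure, lintegral_dirac' _ hmeas, smul_eq_mul,
    tsum_eq_single h fun l hl => by simp [(ha.ne hl).symm]]
  simp

theorem IsSample.map_pair {ι : Type*} {Pr : Measure Ω} [IsProbabilityMeasure Pr]
    {κ : ι → Kernel Ω 𝕏} [∀ j, IsMarkovKernel (κ j)] {X : ι → ℕ → Ω → 𝕏}
    (hX : IsSample Pr (fun j => κ j) X) {p q : ι × ℕ} (hpq : p ≠ q) :
    Pr.map (fun ω => (X p.1 p.2 ω, X q.1 q.2 ω)) = Pr.bind (κ p.1 ×ₖ κ q.1) := by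
  classical
  have hpair : Measurable fun ω => (X p.1 p.2 ω, X q.1 q.2 ω) := (hX.1 _ _).prodMk (hX.1 _ _)
  have : IsProbabilityMeasure (Pr.map fun ω => (X p.1 p.2 ω, X q.1 q.2 ω)) :=
    Measure.isProbabilityMeasure_map hpair.aemeasurable
  have : IsProbabilityMeasure (Pr.bind (κ p.1 ×ₖ κ q.1)) := by
    constructor
    simp [Measure.bind_apply MeasurableSet.univ (Kernel.aemeasurable _)]
  refine ext_of_generate_finite _ generateFrom_prod.symm isPiSystem_prod ?_ (by simp)
  rintro _ ⟨A, hA, B, hB, rfl⟩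
  have hrect : (fun ω => (X p.1 p.2 ω, X q.1 q.2 ω)) ⁻¹' (A ×ˢ B)
      = {ω | ∀ r ∈ ({p, q} : Finset (ι × ℕ)), X r.1 r.2 ω ∈ if r = p then A else B} := by
    ext ω
    simp [hpq.symm]
  rw [Measure.map_apply hpair (hA.prod hB), Measure.bind_apply (hA.prod hB) (Kernel.aemeasurable _),
    hrect, hX.2 _ _ fun r _ => by split_ifs <;> assumption]
  refine lintegral_congr fun ω => ?_
  rw [Finset.prod_pair hpq, if_pos rfl, if_neg hpq.symm, Kernel.prod_apply, Measure.prod_prod]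

noncomputable def overlap {ι : Type*} (Pr : Measure Ω) (π : ι → ℕ → Ω → ℝ) (j k : ι) : ℝ≥0∞ :=
  ∑' h, ∫⁻ ω, ENNReal.ofReal (π j h ω) * ENNReal.ofReal (π k h ω) ∂Pr

theorem toReal_sub_mul_self_nonneg {P₀ : Measure 𝕏} [IsProbabilityMeasure P₀] (A : Set 𝕏) :
    0 ≤ (P₀ A).toReal - (P₀ A).toReal * (P₀ A).toReal := by
  have h1 : (P₀ A).toReal ≤ 1 :=
    ENNReal.toReal_le_of_le_ofReal zero_le_one (ENNReal.ofReal_one ▸ prob_le_one)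
  nlinarith [ENNReal.toReal_nonneg (a := P₀ A)]

namespace IsMSSPwith

variable {ι : Type*} {Pr : Measure Ω} {P₀ : Measure 𝕏} {P : ι → Ω → Measure 𝕏}
  {π : ι → ℕ → Ω → ℝ} {θ : ℕ → Ω → 𝕏}

theorem apply_le_one (hP : IsMSSPwith Pr P₀ P π θ) (j : ι) (ω : Ω) (A : Set 𝕏) :
    P j ω A ≤ 1 :=
  have := hP.probP j ω
  prob_le_one

theorem apply_lt_top (hP : IsMSSPwith Pr P₀ P π θ) (j : ι) (ω : Ω) (A : Set 𝕏) :
    P j ω A < ⊤ :=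
  (hP.apply_le_one j ω A).trans_lt ENNReal.one_lt_top

theorem ae_tsum_ofReal_add_ofReal_one_sub [IsProbabilityMeasure P₀]
    (hP : IsMSSPwith Pr P₀ P π θ) (j : ι) :
    ∀ᵐ ω ∂Pr, ∑' h, ENNReal.ofReal (π j h ω) + ENNReal.ofReal (1 - ∑' h, π j h ω) = 1 := by
  filter_upwards [hP.repr j] with ω hω
  rw [← mixM_univ (P₀ := P₀) (a := fun h => θ h ω), ← hω, (hP.probP j ω).measure_univ]

theorem ae_apply_eq_tsum_atom [IsProbabilityMeasure P₀] (hP : IsMSSPwith Pr P₀ P π θ) (j : ι)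
    {A : Set 𝕏} (hA : MeasurableSet A) :
    ∀ᵐ ω ∂Pr, P j ω A
      = ∑' o, atomWeight (fun h => π j h ω) o * atomHit P₀ A (fun h => θ h ω) o := by
  filter_upwards [hP.repr j, hP.ae_tsum_ofReal_add_ofReal_one_sub j] with ω hω hw
  rw [hω, mixM_apply_eq_tsum_atom hw hA]

theorem ae_tsum_atomWeight [IsProbabilityMeasure P₀] (hP : IsMSSPwith Pr P₀ P π θ) (j : ι) :
    ∀ᵐ ω ∂Pr, ∑' o, atomWeight (fun h => π j h ω) o = 1 := by
  filter_upwards [hP.ae_tsum_ofReal_add_ofReal_one_sub j] with ω hw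
  exact tsum_atomWeight hw

theorem measurable_weights (hP : IsMSSPwith Pr P₀ P π θ) :
    Measurable fun ω (j : ι) (h : ℕ) => π j h ω :=
  measurable_pi_lambda _ fun j => measurable_pi_lambda _ fun h => hP.measπ j h

theorem measurable_atoms (hP : IsMSSPwith Pr P₀ P π θ) : Measurable fun ω (h : ℕ) => θ h ω :=
  measurable_pi_lambda _ hP.measθ

theorem lintegral_tsum_mul {κ : Type*} [Countable κ] (hP : IsMSSPwith Pr P₀ P π θ)
    {f : κ → (ι → ℕ → ℝ) → ℝ≥0∞} {g : κ → (ℕ → 𝕏) → ℝ≥0∞} (hf : ∀ i, Measurable (f i))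
    (hg : ∀ i, Measurable (g i)) :
    ∫⁻ ω, ∑' i, f i (fun j h => π j h ω) * g i (fun h => θ h ω) ∂Pr
      = ∑' i, (∫⁻ ω, f i (fun j h => π j h ω) ∂Pr) * ∫⁻ ω, g i (fun h => θ h ω) ∂Pr :=
  hP.indepθπ.symm.lintegral_tsum_mul hP.measurable_weights hP.measurable_atoms hf hg

theorem measurable_indicator_atom (hP : IsMSSPwith Pr P₀ P π θ) {A : Set 𝕏}
    (hA : MeasurableSet A) (h : ℕ) : Measurable fun ω => A.indicator (1 : 𝕏 → ℝ≥0∞) (θ h ω) :=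
  (measurable_one.indicator hA).comp (hP.measθ h)

theorem lintegral_indicator_atom (hP : IsMSSPwith Pr P₀ P π θ) {A : Set 𝕏}
    (hA : MeasurableSet A) (h : ℕ) : ∫⁻ ω, A.indicator 1 (θ h ω) ∂Pr = P₀ A := by
  rw [← lintegral_indicator_one hA, ← hP.lawθ h,
    lintegral_map (measurable_one.indicator hA) (hP.measθ h)]

theorem lintegral_indicator_atom_mul (hP : IsMSSPwith Pr P₀ P π θ) {A : Set 𝕏}
    (hA : MeasurableSet A) {h l : ℕ} (hhl : h ≠ l) :
    ∫⁻ ω, A.indicator 1 (θ h ω) * A.indicator (1 : 𝕏 → ℝ≥0∞) (θ l ω) ∂Pr = P₀ A * P₀ A := by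
  rw [lintegral_mul_eq_lintegral_mul_lintegral_of_indepFun''
      (hP.measurable_indicator_atom hA h).aemeasurable
      (hP.measurable_indicator_atom hA l).aemeasurable ((hP.iidθ.indepFun hhl).comp
        (measurable_one.indicator hA) (measurable_one.indicator hA)),
    hP.lintegral_indicator_atom hA, hP.lintegral_indicator_atom hA]

variable [IsProbabilityMeasure Pr]

theorem lintegral_atomHit (hP : IsMSSPwith Pr P₀ P π θ) {A : Set 𝕏} (hA : MeasurableSet A)
    (o : Option ℕ) : ∫⁻ ω, atomHit P₀ A (fun h => θ h ω) o ∂Pr = P₀ A := by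
  cases o with
  | none => simp [atomHit]
  | some h => exact hP.lintegral_indicator_atom hA h

/-- Hits of distinct components are independent, and the `none` component is deterministic. -/
theorem lintegral_atomHit_mul [IsProbabilityMeasure P₀] (hP : IsMSSPwith Pr P₀ P π θ)
    {A : Set 𝕏} (hA : MeasurableSet A) (o o' : Option ℕ) :
    ∫⁻ ω, atomHit P₀ A (fun h => θ h ω) o * atomHit P₀ A (fun h => θ h ω) o' ∂Pr
      = P₀ A * P₀ A + if o' = o then o.elim 0 (fun _ => P₀ A - P₀ A * P₀ A) else 0 := by
  rcases o with _ | h <;> rcases o' with _ | l <;> simp only [atomHit, reduceCtorEq, if_false,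
    Option.some.injEq, Option.elim, add_zero]
  · simp
  · rw [lintegral_const_mul _ (hP.measurable_indicator_atom hA l), hP.lintegral_indicator_atom hA]
  · rw [lintegral_mul_const _ (hP.measurable_indicator_atom hA h), hP.lintegral_indicator_atom hA]
  · rcases eq_or_ne l h with rfl | hne
    · have hidem : ∀ x, A.indicator (1 : 𝕏 → ℝ≥0∞) x * A.indicator 1 x = A.indicator 1 x := by
        intro x; by_cases hx : x ∈ A <;> simp [hx]
      simp only [hidem, if_true, hP.lintegral_indicator_atom hA]
      rw [add_tsub_cancel_of_le (mul_le_of_le_one_left' prob_le_one)]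
    · rw [if_neg hne, add_zero, hP.lintegral_indicator_atom_mul hA hne.symm]

theorem lintegral_apply [IsProbabilityMeasure P₀] (hP : IsMSSPwith Pr P₀ P π θ) (j : ι)
    {A : Set 𝕏} (hA : MeasurableSet A) : ∫⁻ ω, P j ω A ∂Pr = P₀ A := by
  have hw : ∀ o, Measurable fun ω => atomWeight (fun h => π j h ω) o :=
    fun o => (measurable_atomWeight_apply j o).comp hP.measurable_weights
  calc ∫⁻ ω, P j ω A ∂Pr
      = ∑' o, (∫⁻ ω, atomWeight (fun h => π j h ω) o ∂Pr) * P₀ A := by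
        rw [lintegral_congr_ae (hP.ae_apply_eq_tsum_atom j hA),
          hP.lintegral_tsum_mul (f := fun o a => atomWeight (a j) o)
            (measurable_atomWeight_apply j) (measurable_atomHit P₀ hA)]
        simp_rw [hP.lintegral_atomHit hA]
    _ = P₀ A := by
        rw [ENNReal.tsum_mul_right, ← lintegral_tsum fun o => (hw o).aemeasurable,
          lintegral_congr_ae (hP.ae_tsum_atomWeight j)]
        simp

theorem tsum_lintegral_atomWeight_mul [IsProbabilityMeasure P₀] (hP : IsMSSPwith Pr P₀ P π θ)
    (j k : ι) : ∑' p : Option ℕ × Option ℕ,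
      ∫⁻ ω, atomWeight (fun h => π j h ω) p.1 * atomWeight (fun h => π k h ω) p.2 ∂Pr = 1 := by
  have hwjk : ∀ p : Option ℕ × Option ℕ, Measurable fun ω =>
      atomWeight (fun h => π j h ω) p.1 * atomWeight (fun h => π k h ω) p.2 := fun p =>
    ((measurable_atomWeight_apply j p.1).fun_mul (measurable_atomWeight_apply k p.2)).comp
      hP.measurable_weights
  have hone : ∀ᵐ ω ∂Pr, ∑' p : Option ℕ × Option ℕ,
      atomWeight (fun h => π j h ω) p.1 * atomWeight (fun h => π k h ω) p.2 = 1 := by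
    filter_upwards [hP.ae_tsum_atomWeight j, hP.ae_tsum_atomWeight k] with ω hj hk
    rw [← ENNReal.tsum_mul_tsum, hj, hk, one_mul]
  rw [← lintegral_tsum fun p => (hwjk p).aemeasurable, lintegral_congr_ae hone]
  simp

theorem lintegral_apply_mul [IsProbabilityMeasure P₀] (hP : IsMSSPwith Pr P₀ P π θ) (j k : ι)
    {A : Set 𝕏} (hA : MeasurableSet A) :
    ∫⁻ ω, P j ω A * P k ω A ∂Pr
      = P₀ A * P₀ A + (P₀ A - P₀ A * P₀ A) * overlap Pr π j k := by
  have hprod : ∀ᵐ ω ∂Pr, P j ω A * P k ω A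
      = ∑' p : Option ℕ × Option ℕ,
          (atomWeight (fun h => π j h ω) p.1 * atomWeight (fun h => π k h ω) p.2)
            * (atomHit P₀ A (fun h => θ h ω) p.1 * atomHit P₀ A (fun h => θ h ω) p.2) := by
    filter_upwards [hP.ae_apply_eq_tsum_atom j hA, hP.ae_apply_eq_tsum_atom k hA] with ω hj hk
    rw [hj, hk, ENNReal.tsum_mul_tsum]
    congr with p
    ring
  rw [lintegral_congr_ae hprod]
  refine (hP.lintegral_tsum_mul
    (f := fun (p : Option ℕ × Option ℕ) a => atomWeight (a j) p.1 * atomWeight (a k) p.2)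
    (g := fun (p : Option ℕ × Option ℕ) x => atomHit P₀ A x p.1 * atomHit P₀ A x p.2)
    (fun p => (measurable_atomWeight_apply j p.1).fun_mul (measurable_atomWeight_apply k p.2))
    (fun p => (measurable_atomHit P₀ hA p.1).fun_mul (measurable_atomHit P₀ hA p.2))).trans ?_
  simp_rw [hP.lintegral_atomHit_mul hA, mul_add]
  rw [ENNReal.tsum_add, ENNReal.tsum_mul_right, hP.tsum_lintegral_atomWeight_mul j k, one_mul,
    ENNReal.tsum_prod_mul_ite_eq (F := fun o o' => ∫⁻ ω, atomWeight (fun h => π j h ω) o *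
      atomWeight (fun h => π k h ω) o' ∂Pr) (fun o => o.elim 0 fun _ => P₀ A - P₀ A * P₀ A),
    ENNReal.tsum_option, overlap, mul_comm (P₀ A - _), ← ENNReal.tsum_mul_right]
  simp only [Option.elim, mul_zero, zero_add]
  rfl

theorem ae_injective_atoms [IsProbabilityMeasure P₀] [NullSingletonClass P₀] [MeasurableEq 𝕏]
    (hP : IsMSSPwith Pr P₀ P π θ) : ∀ᵐ ω ∂Pr, Function.Injective fun h => θ h ω := by
  have hne : ∀ h l, h ≠ l → ∀ᵐ ω ∂Pr, θ h ω ≠ θ l ω := by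
    intro h l hhl
    have hlaw : Pr.map (fun ω => (θ h ω, θ l ω)) = P₀.prod P₀ := by
      have := (indepFun_iff_map_prod_eq_prod_map_map (hP.measθ h).aemeasurable
        (hP.measθ l).aemeasurable).mp (hP.iidθ.indepFun hhl)
      rwa [hP.lawθ h, hP.lawθ l] at this
    have htie : Pr {ω | θ h ω = θ l ω} = 0 := by
      rw [show {ω | θ h ω = θ l ω} = (fun ω => (θ h ω, θ l ω)) ⁻¹' Set.diagonal 𝕏 from rfl,
        ← Measure.map_apply ((hP.measθ h).prodMk (hP.measθ l)) measurableSet_diagonal, hlaw,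
        Measure.prod_diagonal]
      simp
    exact measure_eq_zero_iff_ae_notMem.mp htie
  have hall : ∀ᵐ ω ∂Pr, ∀ h l, h ≠ l → θ h ω ≠ θ l ω := by
    refine ae_all_iff.mpr fun h => ae_all_iff.mpr fun l => ?_
    by_cases hhl : h = l
    · exact ae_of_all _ fun _ hhl' => absurd hhl hhl'
    · filter_upwards [hne h l hhl] with ω hω _ using hω
  filter_upwards [hall] with ω hω h l
  exact not_imp_not.mp (hω h l)

noncomputable def kernel (hP : IsMSSPwith Pr P₀ P π θ) (j : ι) : Kernel Ω 𝕏 :=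
  ⟨P j, Measure.measurable_of_measurable_coe _ fun s hs => hP.measP j s hs⟩

instance (hP : IsMSSPwith Pr P₀ P π θ) (j : ι) : IsMarkovKernel (hP.kernel j) :=
  ⟨hP.probP j⟩

theorem measure_tie [IsProbabilityMeasure P₀] [NullSingletonClass P₀] [MeasurableEq 𝕏]
    (hP : IsMSSPwith Pr P₀ P π θ) {X : ι → ℕ → Ω → 𝕏} (hX : IsSample Pr P X) {p q : ι × ℕ}
    (hpq : p ≠ q) : Pr {ω | X p.1 p.2 ω = X q.1 q.2 ω} = overlap Pr π p.1 q.1 := by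
  have hpair : Measurable fun ω => (X p.1 p.2 ω, X q.1 q.2 ω) := (hX.1 _ _).prodMk (hX.1 _ _)
  have hdiag : ∀ᵐ ω ∂Pr, (P p.1 ω).prod (P q.1 ω) (Set.diagonal 𝕏)
      = ∑' h, ENNReal.ofReal (π p.1 h ω) * ENNReal.ofReal (π q.1 h ω) := by
    filter_upwards [hP.repr p.1, hP.repr q.1, hP.ae_injective_atoms] with ω hp hq hinj
    have := hP.probP q.1 ω
    rw [Measure.prod_diagonal, hp, hq, lintegral_mixM_singleton _ _ hinj]
  calc Pr {ω | X p.1 p.2 ω = X q.1 q.2 ω}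
      = Pr.map (fun ω => (X p.1 p.2 ω, X q.1 q.2 ω)) (Set.diagonal 𝕏) :=
        (Measure.map_apply hpair measurableSet_diagonal).symm
    _ = ∫⁻ ω, (P p.1 ω).prod (P q.1 ω) (Set.diagonal 𝕏) ∂Pr := by
        rw [IsSample.map_pair (κ := hP.kernel) hX hpq,
          Measure.bind_apply measurableSet_diagonal (Kernel.aemeasurable _)]
        simp_rw [Kernel.prod_apply]
        rfl
    _ = overlap Pr π p.1 q.1 := by
        rw [lintegral_congr_ae hdiag, lintegral_tsum fun h =>
          ((hP.measπ p.1 h).ennreal_ofReal.fun_mul (hP.measπ q.1 h).ennreal_ofReal).aemeasurable]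
        rfl

theorem integral_toReal_apply [IsProbabilityMeasure P₀] (hP : IsMSSPwith Pr P₀ P π θ) (j : ι)
    {A : Set 𝕏} (hA : MeasurableSet A) : ∫ ω, (P j ω A).toReal ∂Pr = (P₀ A).toReal := by
  rw [integral_toReal (hP.measP j A hA).aemeasurable
    (ae_of_all _ fun ω => hP.apply_lt_top j ω A), hP.lintegral_apply j hA]

theorem covR_eq [IsProbabilityMeasure P₀] (hP : IsMSSPwith Pr P₀ P π θ) (j k : ι)
    {A : Set 𝕏} (hA : MeasurableSet A) :
    covR Pr (fun ω => (P j ω A).toReal) (fun ω => (P k ω A).toReal)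
      = ((P₀ A).toReal - (P₀ A).toReal * (P₀ A).toReal) * (overlap Pr π j k).toReal := by
  have hmoment := hP.lintegral_apply_mul j k hA
  have hfin : (P₀ A - P₀ A * P₀ A) * overlap Pr π j k ≠ ⊤ := by
    have htotal : P₀ A * P₀ A + (P₀ A - P₀ A * P₀ A) * overlap Pr π j k ≤ 1 :=
      calc P₀ A * P₀ A + (P₀ A - P₀ A * P₀ A) * overlap Pr π j k
          = ∫⁻ ω, P j ω A * P k ω A ∂Pr := hmoment.symm
        _ ≤ ∫⁻ _, 1 ∂Pr :=
            lintegral_mono fun ω => mul_le_one' (hP.apply_le_one j ω A) (hP.apply_le_one k ω A)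
        _ = 1 := by simp
    exact ne_top_of_le_ne_top ENNReal.one_ne_top (le_add_self.trans htotal)
  have hprod : ∫ ω, (P j ω A).toReal * (P k ω A).toReal ∂Pr
      = (P₀ A * P₀ A + (P₀ A - P₀ A * P₀ A) * overlap Pr π j k).toReal := by
    simp_rw [← ENNReal.toReal_mul]
    rw [integral_toReal ((hP.measP j A hA).fun_mul (hP.measP k A hA)).aemeasurable
      (ae_of_all _ fun ω => ENNReal.mul_lt_top (hP.apply_lt_top j ω A) (hP.apply_lt_top k ω A)),
      hmoment]
  rw [covR, hprod, hP.integral_toReal_apply j hA, hP.integral_toReal_apply k hA,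
    ENNReal.toReal_add (ENNReal.mul_ne_top (measure_ne_top _ _) (measure_ne_top _ _)) hfin,
    ENNReal.toReal_mul, ENNReal.toReal_mul, ENNReal.toReal_sub_of_le
      (mul_le_of_le_one_left' prob_le_one) (measure_ne_top _ _), ENNReal.toReal_mul]
  ring

theorem variance_eq [IsProbabilityMeasure P₀] (hP : IsMSSPwith Pr P₀ P π θ) (j : ι)
    {A : Set 𝕏} (hA : MeasurableSet A) :
    variance (fun ω => (P j ω A).toReal) Pr
      = ((P₀ A).toReal - (P₀ A).toReal * (P₀ A).toReal) * (overlap Pr π j j).toReal := by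
  have hmeas : Measurable fun ω => (P j ω A).toReal :=
    ENNReal.measurable_toReal.comp (hP.measP j A hA)
  have hmem : MemLp (fun ω => (P j ω A).toReal) 2 Pr := by
    refine MemLp.of_bound hmeas.aestronglyMeasurable 1 (ae_of_all _ fun ω => ?_)
    rw [Real.norm_eq_abs, abs_of_nonneg ENNReal.toReal_nonneg]
    exact ENNReal.toReal_le_of_le_ofReal zero_le_one (ENNReal.ofReal_one ▸ hP.apply_le_one j ω A)
  rw [variance_eq_sub hmem, ← hP.covR_eq j j hA, covR]
  simp [pow_two]

theorem overlap_toReal_pos [IsProbabilityMeasure P₀] (hP : IsMSSPwith Pr P₀ P π θ) {j : ι}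
    {A : Set 𝕏} (hA : MeasurableSet A) (hV : 0 < variance (fun ω => (P j ω A).toReal) Pr) :
    0 < (overlap Pr π j j).toReal :=
  pos_of_mul_pos_right (hP.variance_eq j hA ▸ hV) (toReal_sub_mul_self_nonneg A)

theorem corrR_eq [IsProbabilityMeasure P₀] (hP : IsMSSPwith Pr P₀ P π θ) (j k : ι)
    {A : Set 𝕏} (hA : MeasurableSet A) (hV : 0 < variance (fun ω => (P j ω A).toReal) Pr) :
    corrR Pr (fun ω => (P j ω A).toReal) (fun ω => (P k ω A).toReal)
      = (overlap Pr π j k).toReal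
          / (√(overlap Pr π j j).toReal * √(overlap Pr π k k).toReal) := by
  set c := (P₀ A).toReal - (P₀ A).toReal * (P₀ A).toReal
  have hc : 0 < c := pos_of_mul_pos_left (hP.variance_eq j hA ▸ hV) ENNReal.toReal_nonneg
  have hsqrt := Real.mul_self_sqrt hc.le
  rw [corrR, hP.covR_eq j k hA, hP.variance_eq j hA, hP.variance_eq k hA,
    Real.sqrt_mul hc.le, Real.sqrt_mul hc.le,
    show √c * √(overlap Pr π j j).toReal * (√c * √(overlap Pr π k k).toReal)
      = c * (√(overlap Pr π j j).toReal * √(overlap Pr π k k).toReal) by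
        linear_combination (√(overlap Pr π j j).toReal * √(overlap Pr π k k).toReal) * hsqrt,
    mul_div_mul_left _ _ hc.ne']

theorem integral_mul_eq_zero_iff (hP : IsMSSPwith Pr P₀ P π θ) (j k : ι) (h : ℕ) :
    ∫ ω, π j h ω * π k h ω ∂Pr = 0
      ↔ ∫⁻ ω, ENNReal.ofReal (π j h ω) * ENNReal.ofReal (π k h ω) ∂Pr = 0 := by
  have hbound : ∀ᵐ ω ∂Pr, 0 ≤ π j h ω ∧ 0 ≤ π j h ω * π k h ω ∧ π j h ω * π k h ω ≤ 1 := by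
    filter_upwards [hP.subprob j, hP.subprob k] with ω hj hk
    exact ⟨(hj.1 h).1, mul_nonneg (hj.1 h).1 (hk.1 h).1,
      mul_le_one₀ (hj.1 h).2 (hk.1 h).1 (hk.1 h).2⟩
  have hfin : ∫⁻ ω, ENNReal.ofReal (π j h ω * π k h ω) ∂Pr ≠ ⊤ :=
    ne_top_of_le_ne_top (measure_ne_top Pr Set.univ) <| (lintegral_mono_ae <|
      hbound.mono fun _ hω => ENNReal.ofReal_le_one.mpr hω.2.2).trans_eq (by simp)
  rw [integral_eq_lintegral_of_nonneg_ae (hbound.mono fun _ hω => hω.2.1)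
      ((hP.measπ j h).fun_mul (hP.measπ k h)).aestronglyMeasurable,
    ENNReal.toReal_eq_zero_iff, or_iff_left hfin,
    lintegral_congr_ae (hbound.mono fun _ hω => ENNReal.ofReal_mul hω.1)]

end IsMSSPwith

/-- Properties of the correlation between `P j (A)` and `P k (A)` for a
multivariate species sampling process: it is nonnegative; it vanishes iff the across-group tie
probability vanishes, iff `E[π_{j,h} π_{k,h}] = 0` for every `h`; and when the two within-group
tie probabilities coincide and are positive it equals the ratio of the across- to within-group
tie probabilities. -/
theorem mSSP_correlation_properties {Ω : Type*} [MeasurableSpace Ω] {𝕏 : Type*}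
    [MeasurableSpace 𝕏] [StandardBorelSpace 𝕏] {ι : Type*}
    (Pr : Measure Ω) [IsProbabilityMeasure Pr]
    (P₀ : Measure 𝕏) [IsProbabilityMeasure P₀] [NullSingletonClass P₀]
    (P : ι → Ω → Measure 𝕏) (π : ι → ℕ → Ω → ℝ) (θ : ℕ → Ω → 𝕏)
    (hP : IsMSSPwith Pr P₀ P π θ)
    (X : ι → ℕ → Ω → 𝕏) (hX : IsSample Pr P X)
    (j k : ι) (hjk : j ≠ k) (A : Set 𝕏) (hA : MeasurableSet A)
    (hVj : 0 < variance (fun ω => (P j ω A).toReal) Pr)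
    (hVk : 0 < variance (fun ω => (P k ω A).toReal) Pr) :
    (0 ≤ corrR Pr (fun ω => (P j ω A).toReal) (fun ω => (P k ω A).toReal)) ∧
    (corrR Pr (fun ω => (P j ω A).toReal) (fun ω => (P k ω A).toReal) = 0 ↔
      Pr {ω | X j 0 ω = X k 0 ω} = 0) ∧
    (Pr {ω | X j 0 ω = X k 0 ω} = 0 ↔
      ∀ h : ℕ, ∫ ω, π j h ω * π k h ω ∂Pr = 0) ∧
    (Pr {ω | X j 0 ω = X j 1 ω} = Pr {ω | X k 0 ω = X k 1 ω} →
      0 < Pr {ω | X j 0 ω = X j 1 ω} →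
      corrR Pr (fun ω => (P j ω A).toReal) (fun ω => (P k ω A).toReal)
        = (Pr {ω | X j 0 ω = X k 0 ω}).toReal / (Pr {ω | X j 0 ω = X j 1 ω}).toReal) := by
  have tie_jk : Pr {ω | X j 0 ω = X k 0 ω} = overlap Pr π j k :=
    hP.measure_tie hX (p := (j, 0)) (q := (k, 0)) (by simp [hjk])
  have tie_jj : Pr {ω | X j 0 ω = X j 1 ω} = overlap Pr π j j :=
    hP.measure_tie hX (p := (j, 0)) (q := (j, 1)) (by simp)
  have tie_kk : Pr {ω | X k 0 ω = X k 1 ω} = overlap Pr π k k :=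
    hP.measure_tie hX (p := (k, 0)) (q := (k, 1)) (by simp)
  have hden : 0 < √(overlap Pr π j j).toReal * √(overlap Pr π k k).toReal :=
    mul_pos (Real.sqrt_pos.mpr (hP.overlap_toReal_pos hA hVj))
      (Real.sqrt_pos.mpr (hP.overlap_toReal_pos hA hVk))
  have hfin : overlap Pr π j k ≠ ⊤ := tie_jk ▸ measure_ne_top _ _
  rw [hP.corrR_eq j k hA hVj, tie_jk, tie_jj, tie_kk]
  refine ⟨by positivity, ?_, ?_, fun hjj_kk _ => ?_⟩
  · rw [div_eq_zero_iff, or_iff_left hden.ne', ENNReal.toReal_eq_zero_iff, or_iff_left hfin]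
  · rw [overlap, ENNReal.tsum_eq_zero]
    exact forall_congr' fun h => (hP.integral_mul_eq_zero_iff j k h).symm
  · rw [← hjj_kk, Real.mul_self_sqrt ENNReal.toReal_nonneg]

end MSSP
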